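/- In any weak concurrent Kleene algebra, for all elements p, q, m, c: (((p+q)∥m)* · ((p+q)∥c)*)* ≤ (p+q)* ∥ (m+c)*. (This is the algebraic content of the lower-bound theorem for Rabin's choice coordination protocol, where p, q are the tourists, m the museum and c the church.) -/
import Mathlib


/-- Operations of a weak concurrent Kleene algebra. -/
class WCKAOps (K : Type*) where
  add : K → K → K
  seq : K → K → K
  par : K → K → K
  star : K → K
  zero : K
  one : K

namespace WCKAOps

variable {K : Type*} [WCKAOps K]

/-- The natural order: `x ≤ y` iff `x + y = y`. -/
def kle (x y : K) : Prop := add x y = y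

end WCKAOps

open WCKAOps

/-- Axioms of a weak concurrent Kleene algebra. -/
class WCKA (K : Type*) [WCKAOps K] : Prop where
  add_assoc : ∀ x y z : K, add (add x y) z = add x (add y z)
  add_comm : ∀ x y : K, add x y = add y x
  add_idem : ∀ x : K, add x x = x
  add_zero : ∀ x : K, add x zero = x
  seq_assoc : ∀ x y z : K, seq (seq x y) z = seq x (seq y z)
  one_seq : ∀ x : K, seq one x = x
  seq_one : ∀ x : K, seq x one = x
  zero_seq : ∀ x : K, seq zero x = zero
  add_seq : ∀ x y z : K, seq (add x y) z = add (seq x z) (seq y z)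
  seq_subdistrib : ∀ x y z : K, kle (add (seq x y) (seq x z)) (seq x (add y z))
  star_unfold : ∀ x : K, add one (seq x (star x)) = star x
  star_induction : ∀ x y : K, kle (seq x y) y → kle (seq (star x) y) y
  par_assoc : ∀ x y z : K, par (par x y) z = par x (par y z)
  par_comm : ∀ x y : K, par x y = par y x
  par_one_one : par (one : K) one = one
  par_subdistrib : ∀ x y z : K, kle (add (par x y) (par x z)) (par x (add y z))
  interchange : ∀ x y u v : K, kle (seq (par x y) (par u v)) (par (seq x u) (seq y v))


section Aux
variable {K : Type*} [WCKAOps K] [WCKA K]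

lemma kle_refl (x : K) : kle x x := WCKA.add_idem x

lemma kle_trans {x y z : K} (h1 : kle x y) (h2 : kle y z) : kle x z := by
  unfold kle at *
  rw [← h2, ← WCKA.add_assoc, h1]

lemma kle_add_left (x y : K) : kle x (add x y) := by
  unfold kle
  rw [← WCKA.add_assoc, WCKA.add_idem]

lemma kle_add_right (x y : K) : kle y (add x y) := by
  rw [WCKA.add_comm x y]; exact kle_add_left y x

lemma add_kle {x y z : K} (h1 : kle x z) (h2 : kle y z) : kle (add x y) z := by
  unfold kle at *
  rw [WCKA.add_assoc, h2, h1]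

lemma seq_mono_right {y z : K} (x : K) (h : kle y z) : kle (seq x y) (seq x z) := by
  have h2 : add y z = z := h
  have := WCKA.seq_subdistrib x y z
  rw [h2] at this
  exact kle_trans (kle_add_left (seq x y) (seq x z)) this

lemma seq_mono_left {x y : K} (z : K) (h : kle x y) : kle (seq x z) (seq y z) := by
  have h2 : add x y = y := h
  unfold kle
  rw [← WCKA.add_seq, h2]

lemma par_mono_right {y z : K} (x : K) (h : kle y z) : kle (par x y) (par x z) := by
  have h2 : add y z = z := h
  have := WCKA.par_subdistrib x y z
  rw [h2] at this
  exact kle_trans (kle_add_left (par x y) (par x z)) this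

lemma par_mono {x y u v : K} (h1 : kle x u) (h2 : kle y v) : kle (par x y) (par u v) := by
  refine kle_trans (par_mono_right x h2) ?_
  rw [WCKA.par_comm x v, WCKA.par_comm u v]
  exact par_mono_right v h1

lemma one_kle_star (x : K) : kle one (star x) := by
  have := WCKA.star_unfold x
  conv_rhs => rw [← this]
  exact kle_add_left one (seq x (star x))

lemma seq_star_kle_star (x : K) : kle (seq x (star x)) (star x) := by
  have := WCKA.star_unfold x
  conv_rhs => rw [← this]
  exact kle_add_right one (seq x (star x))

lemma star_kle_of {x y : K} (h1 : kle one y) (h2 : kle (seq x y) y) : kle (star x) y := by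
  have h3 : kle (seq (star x) y) y := WCKA.star_induction x y h2
  have h4 : kle (star x) (seq (star x) y) := by
    have := seq_mono_right (star x) h1
    rwa [WCKA.seq_one] at this
  exact kle_trans h4 h3

end Aux

/-- The algebraic lower bound for Rabin's choice coordination protocol:
`(((p+q)∥m)* · ((p+q)∥c)*)* ≤ (p+q)* ∥ (m+c)*`. -/
theorem wcka_rabin_lower_bound {K : Type*} [WCKAOps K] [WCKA K] (p q m c : K) :
    kle (star (seq (star (par (add p q) m)) (star (par (add p q) c))))
      (par (star (add p q)) (star (add m c))) := by
  set a := add p q with ha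
  set d := add m c with hd
  set s := par (star a) (star d) with hs
  have hone : kle (one : K) s := by
    have := par_mono (one_kle_star a) (one_kle_star d)
    rw [WCKA.par_one_one] at this
    exact this
  have key : ∀ w : K, kle w d → kle (seq (par a w) s) s := by
    intro w hw
    have h1 : kle (seq (par a w) s) (par (seq a (star a)) (seq w (star d))) :=
      WCKA.interchange a w (star a) (star d)
    have h2 : kle (seq a (star a)) (star a) := seq_star_kle_star a
    have h3 : kle (seq w (star d)) (star d) :=
      kle_trans (seq_mono_left (star d) hw) (seq_star_kle_star d)
    exact kle_trans h1 (par_mono h2 h3)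
  have hm : kle (seq (star (par a m)) s) s :=
    WCKA.star_induction _ _ (key m (kle_add_left m c))
  have hc : kle (seq (star (par a c)) s) s :=
    WCKA.star_induction _ _ (key c (kle_add_right m c))
  apply star_kle_of hone
  rw [WCKA.seq_assoc]
  exact kle_trans (seq_mono_right _ hc) hm
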